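/- arXiv:1602.02464 — 5 statements merged into one kernel-verified Lean document; each statement's English description precedes it below -/
import Mathlib

section
/- If α and β are angles for the initial and terminal directions e_γ(a) and e_γ(b) of a regular curve γ, then i_γ ∈ (β−α)/(2π) + ℤ and j_γ ∈ (β+α)/(2π) + ℤ. In particular, i_γ is an integer when e_γ(a) = e_γ(b), and j_γ is an integer when e_γ(a) and e_γ(b) are reflections of each other in a horizontal line. -/
open Real Set

noncomputable section

abbrev E2 : Type := EuclideanSpace ℝ (Fin 2)

def vec2 (x y : ℝ) : E2 := WithLp.toLp 2 ![x, y]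

def IsAngleFunction (a b : ℝ) (v : ℝ → E2) (θ : ℝ → ℝ) : Prop :=
  ContinuousOn θ (Icc a b) ∧
    ∀ u ∈ Icc a b, ‖v u‖⁻¹ • v u = vec2 (Real.cos (θ u)) (Real.sin (θ u))

/-! Two angles of the same unit vector agree in `Real.Angle = ℝ ⧸ 2πℤ`, so `θ a = α` and
`θ b = β` there; since the coercion `ℝ → Real.Angle` is additive, `θ b ∓ θ a` and `β ∓ α`
agree there too, i.e. differ by an integer multiple of `2π`. -/

lemma vec2_inj {x y x' y' : ℝ} : vec2 x y = vec2 x' y' ↔ x = x' ∧ y = y' := by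
  refine ⟨fun h => ⟨congrFun (congrArg WithLp.ofLp h) 0, congrFun (congrArg WithLp.ofLp h) 1⟩,
    fun ⟨hx, hy⟩ => hx ▸ hy ▸ rfl⟩

lemma vec2_cos_sin_eq_iff {x y : ℝ} :
    vec2 (cos x) (sin x) = vec2 (cos y) (sin y) ↔ (x : Real.Angle) = y := by
  rw [vec2_inj]
  refine ⟨fun ⟨hc, hs⟩ => Real.Angle.cos_sin_inj hc hs, fun h => ?_⟩
  rw [← Real.Angle.cos_coe, ← Real.Angle.sin_coe, h, Real.Angle.cos_coe, Real.Angle.sin_coe]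
  exact ⟨rfl, rfl⟩

lemma exists_int_div_two_pi_eq_of_coe_eq {x y : ℝ} (h : (x : Real.Angle) = y) :
    ∃ k : ℤ, x / (2 * π) = y / (2 * π) + k := by
  obtain ⟨k, hk⟩ := Real.Angle.angle_eq_iff_two_pi_dvd_sub.mp h
  exact ⟨k, by field_simp; linarith⟩

lemma exists_int_div_two_pi_eq_of_coe_eq_zero {x : ℝ} (h : (x : Real.Angle) = 0) :
    ∃ k : ℤ, x / (2 * π) = k := by
  simpa using exists_int_div_two_pi_eq_of_coe_eq (h.trans Real.Angle.coe_zero.symm)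

theorem i_index_j_index_mem_general (a b : ℝ) (hab : a ≤ b) (v : ℝ → E2)
    (θ : ℝ → ℝ) (hθ : IsAngleFunction a b v θ)
    (α β : ℝ)
    (hα : ‖v a‖⁻¹ • v a = vec2 (Real.cos α) (Real.sin α))
    (hβ : ‖v b‖⁻¹ • v b = vec2 (Real.cos β) (Real.sin β)) :
    (∃ k : ℤ, (θ b - θ a) / (2 * π) = (β - α) / (2 * π) + k) ∧
    (∃ k : ℤ, (θ b + θ a) / (2 * π) = (β + α) / (2 * π) + k) ∧
    (‖v a‖⁻¹ • v a = ‖v b‖⁻¹ • v b → ∃ k : ℤ, (θ b - θ a) / (2 * π) = k) ∧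
    (‖v b‖⁻¹ • v b = vec2 (Real.cos α) (-Real.sin α) →
      ∃ k : ℤ, (θ b + θ a) / (2 * π) = k) := by
  have hθa : (θ a : Real.Angle) = α :=
    vec2_cos_sin_eq_iff.mp ((hθ.2 a ⟨le_rfl, hab⟩).symm.trans hα)
  have hθb : (θ b : Real.Angle) = β :=
    vec2_cos_sin_eq_iff.mp ((hθ.2 b ⟨hab, le_rfl⟩).symm.trans hβ)
  have hsub : ((θ b - θ a : ℝ) : Real.Angle) = (β - α : ℝ) := by
    rw [Real.Angle.coe_sub, Real.Angle.coe_sub, hθa, hθb]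
  have hadd : ((θ b + θ a : ℝ) : Real.Angle) = (β + α : ℝ) := by
    rw [Real.Angle.coe_add, Real.Angle.coe_add, hθa, hθb]
  refine ⟨exists_int_div_two_pi_eq_of_coe_eq hsub, exists_int_div_two_pi_eq_of_coe_eq hadd,
    fun h => exists_int_div_two_pi_eq_of_coe_eq_zero ?_,
    fun h => exists_int_div_two_pi_eq_of_coe_eq_zero ?_⟩
  · have hβα : (β : Real.Angle) = α := vec2_cos_sin_eq_iff.mp ((hα.symm.trans h).trans hβ).symm
    rw [hsub, Real.Angle.coe_sub, hβα, sub_self]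
  · rw [← cos_neg, ← sin_neg] at h
    have hβα : (β : Real.Angle) = -α := by
      rw [← Real.Angle.coe_neg]; exact vec2_cos_sin_eq_iff.mp (hβ.symm.trans h)
    rw [hadd, Real.Angle.coe_add, hβα, neg_add_cancel]

/-- if `α` and `β` are angles for the initial and terminal directions
`e_γ(a)` and `e_γ(b)` of a regular curve `γ`, then `i_γ ∈ (β−α)/(2π) + ℤ` and
`j_γ ∈ (β+α)/(2π) + ℤ`.  In particular, `i_γ ∈ ℤ` if `e_γ(a) = e_γ(b)`, and
`j_γ ∈ ℤ` if `e_γ(a)` and `e_γ(b)` are reflections of each other in a horizontal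
line. -/
theorem i_index_j_index_mem (a b : ℝ) (hab : a ≤ b) (γ v : ℝ → E2)
    (hderiv : ∀ u ∈ Icc a b, HasDerivAt γ (v u) u)
    (hcont : ContinuousOn v (Icc a b))
    (hne : ∀ u ∈ Icc a b, v u ≠ 0)
    (θ : ℝ → ℝ) (hθ : IsAngleFunction a b v θ)
    (α β : ℝ)
    (hα : ‖v a‖⁻¹ • v a = vec2 (Real.cos α) (Real.sin α))
    (hβ : ‖v b‖⁻¹ • v b = vec2 (Real.cos β) (Real.sin β)) :
    (∃ k : ℤ, (θ b - θ a) / (2 * π) = (β - α) / (2 * π) + k) ∧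
    (∃ k : ℤ, (θ b + θ a) / (2 * π) = (β + α) / (2 * π) + k) ∧
    (‖v a‖⁻¹ • v a = ‖v b‖⁻¹ • v b → ∃ k : ℤ, (θ b - θ a) / (2 * π) = k) ∧
    (‖v b‖⁻¹ • v b = vec2 (Real.cos α) (-Real.sin α) →
      ∃ k : ℤ, (θ b + θ a) / (2 * π) = k) :=
  i_index_j_index_mem_general a b hab v θ hθ α β hα hβ
end
end

section
/- If {σ_t : [a,b] → ℝ²}, 0 ≤ t ≤ 1, is a regular homotopy (each σ_t regular and the velocity v_{σ_t}(u) continuous in (t,u)), then t ↦ i_{σ_t} ∈ ℝ is continuous, and t ↦ j_{σ_t} + 2ℤ ∈ ℝ/2ℤ is continuous. -/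
open Real Set

noncomputable section

/-!
The unit tangent `(t, u) ↦ v t u / ‖v t u‖` is uniformly continuous on the compact rectangle, so
for `t` near `t₀` the unit tangents of `σ_t` and `σ_{t₀}` are uniformly close, i.e.
`θ t u - θ t₀ u` is uniformly close to `2πℤ`. Since `[a, b]` is connected and `δ ≤ π`, the integer
`k` with `|θ t u - θ t₀ u - 2πk| < δ` does not depend on `u`. Evaluating at `u = a, b`, the
`i`-index moves by less than `δ / π` and the `j`-index by less than `δ / π` modulo `2`.
-/

open Filter Topology Function

theorem dist_vec2_cos_sin_sq (x y : ℝ) :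
    dist (vec2 (cos x) (sin x)) (vec2 (cos y) (sin y)) ^ 2 = 2 - 2 * cos (x - y) := by
  rw [EuclideanSpace.dist_eq, sq_sqrt (by positivity), Fin.sum_univ_two]
  simp only [vec2, PiLp.toLp_apply, Matrix.cons_val_zero, Matrix.cons_val_one, Real.dist_eq,
    sq_abs, cos_sub]
  nlinarith [sin_sq_add_cos_sq x, sin_sq_add_cos_sq y]

theorem exists_int_abs_sub_two_pi_mul_lt_of_cos_lt {x δ : ℝ} (hδ : 0 ≤ δ) (hδπ : δ ≤ π)
    (h : cos δ < cos x) : ∃ m : ℤ, |x - 2 * π * m| < δ := by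
  set m := round (x / (2 * π))
  refine ⟨m, not_le.1 fun hle => h.not_ge ?_⟩
  have hreduce : |x - 2 * π * m| = 2 * π * |x / (2 * π) - m| := by
    rw [← abs_of_pos two_pi_pos, ← abs_mul, abs_of_pos two_pi_pos]
    congr 1
    field_simp
  have hπ : |x - 2 * π * m| ≤ π := by
    nlinarith [abs_sub_round (x / (2 * π)), pi_pos]
  calc cos x = cos |x - 2 * π * m| := by
        rw [cos_abs, ← cos_sub_int_mul_two_pi x m, mul_comm]
    _ ≤ cos δ := cos_le_cos_of_nonneg_of_le_pi hδ hπ hle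

theorem IsPreconnected.exists_int_forall_abs_sub_mul_lt {X : Type*} [TopologicalSpace X]
    {S : Set X} (hS : IsPreconnected S) {g : X → ℝ} (hg : ContinuousOn g S) {p δ : ℝ}
    (hδ : 2 * δ ≤ p) (h : ∀ x ∈ S, ∃ m : ℤ, |g x - p * m| < δ) :
    ∃ k : ℤ, ∀ x ∈ S, |g x - p * k| < δ := by
  rcases S.eq_empty_or_nonempty with rfl | ⟨x₀, hx₀⟩
  · exact ⟨0, by simp⟩
  obtain ⟨k, hk⟩ := h x₀ hx₀
  -- `g '' S` misses the sphere of radius `δ` about `p * k`, so it stays inside the ball.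
  have hcover : g '' S ⊆ Metric.ball (p * k) δ ∪ (Metric.closedBall (p * k) δ)ᶜ := by
    rintro _ ⟨x, hx, rfl⟩
    obtain ⟨m, hm⟩ := h x hx
    by_cases hxk : |g x - p * k| ≤ δ
    · left
      have hmk : |((m - k : ℤ) : ℝ)| < 1 := by
        have hp : 0 < p := by linarith [abs_nonneg (g x - p * m)]
        rw [← mul_lt_mul_iff_of_pos_left hp, ← abs_of_pos hp, ← abs_mul, abs_of_pos hp]
        calc |p * ((m - k : ℤ) : ℝ)| = |(g x - p * k) - (g x - p * m)| := by push_cast; ring_nf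
          _ ≤ |g x - p * k| + |g x - p * m| := abs_sub _ _
          _ < p * 1 := by linarith
      rw [← Int.cast_abs, ← Int.cast_one, Int.cast_lt, Int.abs_lt_one_iff, sub_eq_zero] at hmk
      rw [Metric.mem_ball, Real.dist_eq, ← hmk]
      exact hm
    · right
      rw [mem_compl_iff, Metric.mem_closedBall, Real.dist_eq]
      exact hxk
  have hdisj : Disjoint (Metric.ball (p * k) δ) (Metric.closedBall (p * k) δ)ᶜ :=
    disjoint_compl_right.mono_left Metric.ball_subset_closedBall
  have hball := (hS.image g hg).subset_left_of_subset_union Metric.isOpen_ball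
    Metric.isClosed_closedBall.isOpen_compl hdisj hcover
    ⟨g x₀, mem_image_of_mem g hx₀, by rwa [Metric.mem_ball, Real.dist_eq]⟩
  refine ⟨k, fun x hx => ?_⟩
  simpa only [Metric.mem_ball, Real.dist_eq] using hball (mem_image_of_mem g hx)

theorem AddCircle.dist_coe_le_abs_sub_sub_zsmul (p x y : ℝ) (k : ℤ) :
    dist (x : AddCircle p) (y : AddCircle p) ≤ |x - y - k • p| := by
  calc dist (x : AddCircle p) (y : AddCircle p) = ‖((x - y - k • p : ℝ) : AddCircle p)‖ := by
        rw [dist_eq_norm, AddCircle.coe_sub, AddCircle.coe_sub, AddCircle.coe_zsmul, AddCircle.coe_period, smul_zero, sub_zero]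
    _ ≤ |x - y - k • p| := QuotientAddGroup.norm_mk_le_norm

section RegularHomotopy

variable {α : Type*} [TopologicalSpace α] {s : Set α} {a b : ℝ} {v : α → ℝ → E2}
  {θ : α → ℝ → ℝ} {t₀ : α}

theorem eventually_forall_cos_lt_cos_angle_sub
    (hcont : ContinuousOn (uncurry v) (s ×ˢ Icc a b))
    (hne : ∀ t ∈ s, ∀ u ∈ Icc a b, v t u ≠ 0)
    (hθ : ∀ t ∈ s, IsAngleFunction a b (v t) (θ t)) (ht₀ : t₀ ∈ s) {δ : ℝ} (hδ : 0 < δ)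
    (hδπ : δ ≤ π) :
    ∀ᶠ t in 𝓝[s] t₀, ∀ u ∈ Icc a b, cos δ < cos (θ t u - θ t₀ u) := by
  let w : α → ℝ → E2 := fun t u => ‖v t u‖⁻¹ • v t u
  have hw : ContinuousOn (uncurry w) (s ×ˢ Icc a b) :=
    (hcont.norm.inv₀ fun p hp => norm_ne_zero_iff.2 (hne _ hp.1 _ hp.2)).smul hcont
  have hcosδ : cos δ < 1 := by
    simpa using cos_lt_cos_of_nonneg_of_le_pi le_rfl hδπ hδ
  obtain ⟨V, hV, hVw⟩ := isCompact_Icc.mem_uniformity_of_prod hw ht₀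
    (Metric.dist_mem_uniformity (sqrt_pos.2 (by linarith : 0 < 2 - 2 * cos δ)))
  filter_upwards [hV, self_mem_nhdsWithin] with t htV ht u hu
  have hdist := hVw t htV u hu
  simp only [mem_ofPred_eq, w, (hθ t ht).2 u hu, (hθ t₀ ht₀).2 u hu] at hdist
  rw [lt_sqrt dist_nonneg, dist_vec2_cos_sin_sq] at hdist
  linarith

theorem eventually_exists_int_forall_abs_angle_sub_lt
    (hcont : ContinuousOn (uncurry v) (s ×ˢ Icc a b))
    (hne : ∀ t ∈ s, ∀ u ∈ Icc a b, v t u ≠ 0)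
    (hθ : ∀ t ∈ s, IsAngleFunction a b (v t) (θ t)) (ht₀ : t₀ ∈ s) {δ : ℝ} (hδ : 0 < δ)
    (hδπ : δ ≤ π) :
    ∀ᶠ t in 𝓝[s] t₀, ∃ k : ℤ, ∀ u ∈ Icc a b, |θ t u - θ t₀ u - 2 * π * k| < δ := by
  filter_upwards [eventually_forall_cos_lt_cos_angle_sub hcont hne hθ ht₀ hδ hδπ,
    self_mem_nhdsWithin] with t hcos ht
  exact isPreconnected_Icc.exists_int_forall_abs_sub_mul_lt ((hθ t ht).1.sub (hθ t₀ ht₀).1)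
    (by linarith) fun u hu => exists_int_abs_sub_two_pi_mul_lt_of_cos_lt hδ.le hδπ (hcos u hu)

theorem continuousOn_angle_sub_div_two_pi (hab : a ≤ b)
    (hcont : ContinuousOn (uncurry v) (s ×ˢ Icc a b))
    (hne : ∀ t ∈ s, ∀ u ∈ Icc a b, v t u ≠ 0)
    (hθ : ∀ t ∈ s, IsAngleFunction a b (v t) (θ t)) :
    ContinuousOn (fun t => (θ t b - θ t a) / (2 * π)) s := by
  intro t₀ ht₀
  refine Metric.tendsto_nhds.2 fun ε hε => ?_
  have hδ : 0 < min π (π * ε) := lt_min pi_pos (by positivity)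
  filter_upwards [eventually_exists_int_forall_abs_angle_sub_lt hcont hne hθ ht₀ hδ
    (min_le_left _ _)] with t ⟨k, hk⟩
  have hb := hk b ⟨hab, le_rfl⟩
  have ha := hk a ⟨le_rfl, hab⟩
  rw [Real.dist_eq, div_sub_div_same, abs_div, abs_of_pos two_pi_pos, div_lt_iff₀ two_pi_pos]
  calc |θ t b - θ t a - (θ t₀ b - θ t₀ a)|
      = |(θ t b - θ t₀ b - 2 * π * k) - (θ t a - θ t₀ a - 2 * π * k)| := by ring_nf
    _ ≤ |θ t b - θ t₀ b - 2 * π * k| + |θ t a - θ t₀ a - 2 * π * k| := abs_sub _ _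
    _ < ε * (2 * π) := by linarith [min_le_right π (π * ε)]

theorem continuousOn_coe_angle_add_div_two_pi (hab : a ≤ b)
    (hcont : ContinuousOn (uncurry v) (s ×ˢ Icc a b))
    (hne : ∀ t ∈ s, ∀ u ∈ Icc a b, v t u ≠ 0)
    (hθ : ∀ t ∈ s, IsAngleFunction a b (v t) (θ t)) :
    ContinuousOn (fun t => (((θ t b + θ t a) / (2 * π) : ℝ) : AddCircle (2 : ℝ))) s := by
  intro t₀ ht₀
  refine Metric.tendsto_nhds.2 fun ε hε => ?_
  have hδ : 0 < min π (π * ε) := lt_min pi_pos (by positivity)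
  filter_upwards [eventually_exists_int_forall_abs_angle_sub_lt hcont hne hθ ht₀ hδ
    (min_le_left _ _)] with t ⟨k, hk⟩
  have hb := hk b ⟨hab, le_rfl⟩
  have ha := hk a ⟨le_rfl, hab⟩
  refine (AddCircle.dist_coe_le_abs_sub_sub_zsmul 2 _ _ k).trans_lt ?_
  calc |(θ t b + θ t a) / (2 * π) - (θ t₀ b + θ t₀ a) / (2 * π) - k • (2 : ℝ)|
      = |(θ t b - θ t₀ b - 2 * π * k) + (θ t a - θ t₀ a - 2 * π * k)| / (2 * π) := by
        rw [← abs_of_pos two_pi_pos, ← abs_div, abs_of_pos two_pi_pos, zsmul_eq_mul]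
        congr 1
        field_simp
        ring
    _ ≤ (|θ t b - θ t₀ b - 2 * π * k| + |θ t a - θ t₀ a - 2 * π * k|) / (2 * π) := by
        gcongr
        exact abs_add_le _ _
    _ < ε := by
        rw [div_lt_iff₀ two_pi_pos]
        linarith [min_le_right π (π * ε)]

end RegularHomotopy

theorem i_index_j_index_continuous_of_regular_homotopy_general
    (a b : ℝ) (hab : a ≤ b) (v : ℝ → ℝ → E2)
    (hcont : ContinuousOn (fun p : ℝ × ℝ => v p.1 p.2) (Icc (0:ℝ) 1 ×ˢ Icc a b))
    (hne : ∀ t ∈ Icc (0:ℝ) 1, ∀ u ∈ Icc a b, v t u ≠ 0)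
    (θ : ℝ → ℝ → ℝ)
    (hθ : ∀ t ∈ Icc (0:ℝ) 1, IsAngleFunction a b (v t) (θ t)) :
    ContinuousOn (fun t => (θ t b - θ t a) / (2 * π)) (Icc (0:ℝ) 1) ∧
    ContinuousOn
      (fun t => (((θ t b + θ t a) / (2 * π) : ℝ) : AddCircle (2:ℝ)))
      (Icc (0:ℝ) 1) :=
  ⟨continuousOn_angle_sub_div_two_pi hab hcont hne hθ,
    continuousOn_coe_angle_add_div_two_pi hab hcont hne hθ⟩

/-- if `{σ_t : [a,b] → ℝ²}`, `0 ≤ t ≤ 1`, is a regular homotopy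
(each `σ_t` is a regular curve and the velocity `v_{σ_t}(u)` is jointly continuous
in `(t,u)`), then `t ↦ i_{σ_t} ∈ ℝ` is continuous and
`t ↦ j_{σ_t} + 2ℤ ∈ ℝ/2ℤ` is continuous; here the indices are computed from any
choice of angle functions `θ_t` for the curves `σ_t`. -/
theorem i_index_j_index_continuous_of_regular_homotopy
    (a b : ℝ) (hab : a ≤ b) (σ v : ℝ → ℝ → E2)
    (hderiv : ∀ t ∈ Icc (0:ℝ) 1, ∀ u ∈ Icc a b, HasDerivAt (σ t) (v t u) u)
    (hcont : ContinuousOn (fun p : ℝ × ℝ => v p.1 p.2) (Icc (0:ℝ) 1 ×ˢ Icc a b))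
    (hne : ∀ t ∈ Icc (0:ℝ) 1, ∀ u ∈ Icc a b, v t u ≠ 0)
    (θ : ℝ → ℝ → ℝ)
    (hθ : ∀ t ∈ Icc (0:ℝ) 1, IsAngleFunction a b (v t) (θ t)) :
    ContinuousOn (fun t => (θ t b - θ t a) / (2 * π)) (Icc (0:ℝ) 1) ∧
    ContinuousOn
      (fun t => (((θ t b + θ t a) / (2 * π) : ℝ) : AddCircle (2:ℝ)))
      (Icc (0:ℝ) 1) :=
  i_index_j_index_continuous_of_regular_homotopy_general a b hab v hcont hne θ hθ
end
end

section
/- If {σ_t} is a regular homotopy between regular curves σ_0 and σ_1 in ℝ² which fixes the endpoints and the end directions (σ_t(a), σ_t(b), e_{σ_t}(a), e_{σ_t}(b) are independent of t), then i_{σ_0} = i_{σ_1}. -/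
open Real Set

noncomputable section

/-! The unit directions of the velocities `v t` form a homotopy, relative to the endpoints, between
paths in the circle, and an angle function of `σ_i` is a lift of the `i`-th path through the
covering map `θ ↦ exp (θ * I)` of the circle by `ℝ`. By the homotopy lifting property, lifts of
paths homotopic relative to their endpoints that start at the same point also end at the same point;
shifting one angle function by a multiple of `2π` makes the starting points agree. -/

section

open unitInterval

theorem IsCoveringMap.apply_one_eq_of_homotopicRel {E X : Type*} [TopologicalSpace E]
    [TopologicalSpace X] {p : E → X} (cov : IsCoveringMap p) {γ₀ γ₁ : C(I, X)}
    (h : γ₀.HomotopicRel γ₁ {0, 1}) {Γ₀ Γ₁ : C(I, E)} (hΓ₀ : p ∘ Γ₀ = γ₀) (hΓ₁ : p ∘ Γ₁ = γ₁)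
    (h0 : Γ₀ 0 = Γ₁ 0) : Γ₀ 1 = Γ₁ 1 := by
  have e₀ : γ₀ 0 = p (Γ₀ 0) := by rw [← hΓ₀]; rfl
  have e₁ : γ₁ 0 = p (Γ₀ 0) := by rw [← hΓ₁, h0]; rfl
  rw [(cov.eq_liftPath_iff' e₀).2 ⟨hΓ₀, rfl⟩, (cov.eq_liftPath_iff' e₁).2 ⟨hΓ₁, h0.symm⟩]
  exact cov.liftPath_apply_one_eq_of_homotopicRel h _ e₀ e₁

theorem Circle.lift_sub_eq_of_homotopicRel {γ₀ γ₁ : C(I, Circle)}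
    (h : γ₀.HomotopicRel γ₁ {0, 1}) {Θ₀ Θ₁ : C(I, ℝ)} (hΘ₀ : Circle.exp ∘ Θ₀ = γ₀)
    (hΘ₁ : Circle.exp ∘ Θ₁ = γ₁) : Θ₀ 1 - Θ₀ 0 = Θ₁ 1 - Θ₁ 0 := by
  set c := Θ₀ 0 - Θ₁ 0
  have hc : Circle.exp c = 1 := by
    rw [Circle.exp_sub, div_eq_one]
    have := h.fst_eq_snd (x := 0) (by simp)
    rwa [← hΘ₀, ← hΘ₁] at this
  have hshift : Circle.exp ∘ (Θ₁ + ContinuousMap.const I c) = γ₁ := by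
    funext s
    simp [Circle.exp_add, hc, ← hΘ₁]
  have := Circle.isCoveringMap_exp.apply_one_eq_of_homotopicRel h hΘ₀ hshift (by simp [c])
  simp only [ContinuousMap.add_apply, ContinuousMap.const_apply] at this
  linarith

theorem Path.segment_mem_Icc {a b : ℝ} (hab : a ≤ b) (s : I) : Path.segment a b s ∈ Icc a b :=
  segment_eq_Icc hab ▸ Path.range_segment a b ▸ mem_range_self s

theorem angle_sub_eq_of_homotopy_rel_ends {a b : ℝ} (hab : a ≤ b) {d : ℝ → ℝ → ℂ}
    (hd : ContinuousOn (fun p : ℝ × ℝ => d p.1 p.2) (Icc 0 1 ×ˢ Icc a b))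
    (hnorm : ∀ t ∈ Icc (0:ℝ) 1, ∀ u ∈ Icc a b, ‖d t u‖ = 1)
    (hda : ∀ t ∈ Icc (0:ℝ) 1, d t a = d 0 a) (hdb : ∀ t ∈ Icc (0:ℝ) 1, d t b = d 0 b)
    {θ₀ θ₁ : ℝ → ℝ} (hθ₀c : ContinuousOn θ₀ (Icc a b)) (hθ₁c : ContinuousOn θ₁ (Icc a b))
    (hθ₀ : ∀ u ∈ Icc a b, Complex.exp (θ₀ u * Complex.I) = d 0 u)
    (hθ₁ : ∀ u ∈ Icc a b, Complex.exp (θ₁ u * Complex.I) = d 1 u) :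
    θ₀ b - θ₀ a = θ₁ b - θ₁ a := by
  let seg := Path.segment a b
  have hseg := Path.segment_mem_Icc hab
  let H : C(I × I, Circle) :=
    ⟨fun p => ⟨d p.1 (seg p.2), mem_sphere_zero_iff_norm.2 (hnorm _ p.1.2 _ (hseg _))⟩,
      (hd.comp_continuous (f := fun p : I × I => ((p.1 : ℝ), seg p.2)) (by fun_prop)
        fun p => ⟨p.1.2, hseg p.2⟩).subtype_mk _⟩
  let hom : (H.curry 0).HomotopyRel (H.curry 1) {0, 1} :=
    { toFun := H
      map_zero_left := fun _ => rfl
      map_one_left := fun _ => rfl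
      prop' := by
        rintro t s (rfl | rfl) <;> apply Circle.ext
        · change d t (seg 0) = d 0 (seg 0)
          rw [seg.source]
          exact hda t t.2
        · change d t (seg 1) = d 0 (seg 1)
          rw [seg.target]
          exact hdb t t.2 }
  let Θ₀ : C(I, ℝ) := ⟨θ₀ ∘ seg, hθ₀c.comp_continuous seg.continuous hseg⟩
  let Θ₁ : C(I, ℝ) := ⟨θ₁ ∘ seg, hθ₁c.comp_continuous seg.continuous hseg⟩
  have key := Circle.lift_sub_eq_of_homotopicRel (Θ₀ := Θ₀) (Θ₁ := Θ₁) ⟨hom⟩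
    (funext fun s => Circle.ext (hθ₀ _ (hseg s))) (funext fun s => Circle.ext (hθ₁ _ (hseg s)))
  simpa [Θ₀, Θ₁, seg] using key

end

theorem IsAngleFunction.exp_mul_I_eq {a b : ℝ} {w : ℝ → E2} {θ : ℝ → ℝ}
    (h : IsAngleFunction a b w θ) {u : ℝ} (hu : u ∈ Icc a b) :
    Complex.exp (θ u * Complex.I) = Complex.orthonormalBasisOneI.repr.symm (‖w u‖⁻¹ • w u) := by
  rw [h.2 u hu, Complex.exp_mul_I, ← Complex.ofReal_cos, ← Complex.ofReal_sin]
  simp [vec2]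

theorem i_index_eq_of_regular_homotopy_rel_ends_general
    (a b : ℝ) (hab : a ≤ b) (v : ℝ → ℝ → E2)
    (hcont : ContinuousOn (fun p : ℝ × ℝ => v p.1 p.2) (Icc (0:ℝ) 1 ×ˢ Icc a b))
    (hne : ∀ t ∈ Icc (0:ℝ) 1, ∀ u ∈ Icc a b, v t u ≠ 0)
    (hdira : ∀ t ∈ Icc (0:ℝ) 1, ‖v t a‖⁻¹ • v t a = ‖v 0 a‖⁻¹ • v 0 a)
    (hdirb : ∀ t ∈ Icc (0:ℝ) 1, ‖v t b‖⁻¹ • v t b = ‖v 0 b‖⁻¹ • v 0 b)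
    (θ₀ θ₁ : ℝ → ℝ)
    (hθ₀ : IsAngleFunction a b (v 0) θ₀) (hθ₁ : IsAngleFunction a b (v 1) θ₁) :
    (θ₀ b - θ₀ a) / (2 * π) = (θ₁ b - θ₁ a) / (2 * π) := by
  let J := Complex.orthonormalBasisOneI.repr.symm
  let d t u := J (‖v t u‖⁻¹ • v t u)
  have hd : ContinuousOn (fun p : ℝ × ℝ => d p.1 p.2) (Icc 0 1 ×ˢ Icc a b) :=
    J.continuous.comp_continuousOn <|
      (hcont.norm.inv₀ fun p hp => norm_ne_zero_iff.2 (hne _ hp.1 _ hp.2)).smul hcont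
  have hnorm : ∀ t ∈ Icc (0:ℝ) 1, ∀ u ∈ Icc a b, ‖d t u‖ = 1 :=
    fun t ht u hu => (J.norm_map _).trans (norm_smul_inv_norm (𝕜 := ℝ) (hne t ht u hu))
  rw [angle_sub_eq_of_homotopy_rel_ends hab hd hnorm (fun t ht => congrArg J (hdira t ht))
    (fun t ht => congrArg J (hdirb t ht)) hθ₀.1 hθ₁.1 (fun _ => hθ₀.exp_mul_I_eq)
    (fun _ => hθ₁.exp_mul_I_eq)]

/-- if `{σ_t}` is a regular homotopy between regular curves `σ_0`
and `σ_1` in ℝ² which fixes the endpoints and the end directions (i.e.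
`σ_t(a)`, `σ_t(b)`, `e_{σ_t}(a)`, `e_{σ_t}(b)` do not depend on `t`), then
`i_{σ_0} = i_{σ_1}` (computed from any angle functions `θ₀`, `θ₁` for `σ_0`, `σ_1`). -/
theorem i_index_eq_of_regular_homotopy_rel_ends
    (a b : ℝ) (hab : a ≤ b) (σ v : ℝ → ℝ → E2)
    (hderiv : ∀ t ∈ Icc (0:ℝ) 1, ∀ u ∈ Icc a b, HasDerivAt (σ t) (v t u) u)
    (hcont : ContinuousOn (fun p : ℝ × ℝ => v p.1 p.2) (Icc (0:ℝ) 1 ×ˢ Icc a b))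
    (hne : ∀ t ∈ Icc (0:ℝ) 1, ∀ u ∈ Icc a b, v t u ≠ 0)
    (hfixa : ∀ t ∈ Icc (0:ℝ) 1, σ t a = σ 0 a)
    (hfixb : ∀ t ∈ Icc (0:ℝ) 1, σ t b = σ 0 b)
    (hdira : ∀ t ∈ Icc (0:ℝ) 1, ‖v t a‖⁻¹ • v t a = ‖v 0 a‖⁻¹ • v 0 a)
    (hdirb : ∀ t ∈ Icc (0:ℝ) 1, ‖v t b‖⁻¹ • v t b = ‖v 0 b‖⁻¹ • v 0 b)
    (θ₀ θ₁ : ℝ → ℝ)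
    (hθ₀ : IsAngleFunction a b (v 0) θ₀) (hθ₁ : IsAngleFunction a b (v 1) θ₁) :
    (θ₀ b - θ₀ a) / (2 * π) = (θ₁ b - θ₁ a) / (2 * π) :=
  i_index_eq_of_regular_homotopy_rel_ends_general a b hab v hcont hne hdira hdirb θ₀ θ₁ hθ₀ hθ₁
end
end

section
/- Let G = ⟨a, b | a b a b⁻¹ = 1⟩ be the fundamental group of the Klein bottle, with orientation homomorphism w : G → {±1} given by w(a) = 1, w(b) = −1. Every element of G can be written uniquely as aᵐbⁿ with m, n ∈ ℤ; such an element satisfies w(aᵐbⁿ) = (−1)ⁿ; and for n even, aᵐbⁿ is reversible if and only if m = 0. -/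
/-- An element `g` of a group `G` equipped with a homomorphism `w : G → {±1}` is
*reversible* if some element of the centralizer of `g` is sent to `−1` by `w`. -/
def Reversible {G : Type*} [Group G] (w : G →* ℤˣ) (g : G) : Prop :=
  ∃ h : G, Commute h g ∧ w h = -1

/-- The single relation `a * b * a * b⁻¹` of the Klein bottle group. -/
def kleinRels : Set (FreeGroup (Fin 2)) :=
  {FreeGroup.of 0 * FreeGroup.of 1 * FreeGroup.of 0 * (FreeGroup.of 1)⁻¹}

/-- The Klein bottle group `⟨a, b | a b a b⁻¹⟩`. -/
abbrev KleinGroup : Type := PresentedGroup kleinRels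

def Ka : KleinGroup := PresentedGroup.of 0

def Kb : KleinGroup := PresentedGroup.of 1

/-- The orientation homomorphism `w : KleinGroup → {±1}`, `w(a) = 1`, `w(b) = −1`. -/
def kleinW : KleinGroup →* ℤˣ :=
  PresentedGroup.toGroup (f := fun i : Fin 2 => if i = 0 then 1 else -1)
    (by
      intro r hr
      rw [kleinRels, Set.mem_singleton_iff] at hr
      subst hr
      simp)

/-! From the relation, `b a b⁻¹ = a⁻¹`, so left multiplication by `a^{±1}` or `b^{±1}` maps a
word `aᵐbⁿ` to another such word; hence these words exhaust the group. Uniqueness, and the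
reversibility criterion, are read off the action of the group on `ℤ × ℤ` in which `a` is the
translation `(x, y) ↦ (x + 1, y)` and `b` the glide reflection `(x, y) ↦ (-x, y + 1)`: there
`aᵐbⁿ` sends `(x, y)` to `((-1)ⁿ x + m, y + n)`. If `aᵖb^q` with `q` odd commutes with `aᵐbⁿ`
with `n` even, the first coordinates of the two images of the origin give `p - m = p + m`. -/

namespace KleinGroup

open Equiv

lemma Kb_mul_Ka_mul_Kb_inv : Kb * Ka * Kb⁻¹ = Ka⁻¹ :=
  eq_inv_of_mul_eq_one_right <| by
    rw [← mul_assoc, ← mul_assoc]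
    exact PresentedGroup.one_of_mem rfl

lemma Kb_mul_Ka_zpow_mul_Kb_inv (m : ℤ) : Kb * Ka ^ m * Kb⁻¹ = Ka ^ (-m) := by
  rw [← conj_zpow, Kb_mul_Ka_mul_Kb_inv, inv_zpow, zpow_neg]

lemma Kb_inv_mul_Ka_zpow_mul_Kb (m : ℤ) : Kb⁻¹ * Ka ^ m * Kb = Ka ^ (-m) := by
  rw [← neg_neg m, ← Kb_mul_Ka_zpow_mul_Kb_inv (-m)]
  group

def normalForm (mn : ℤ × ℤ) : KleinGroup := Ka ^ mn.1 * Kb ^ mn.2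

lemma Ka_mul_normalForm (m n : ℤ) : Ka * normalForm (m, n) = normalForm (m + 1, n) := by
  simp only [normalForm, ← mul_assoc, ← zpow_one_add, add_comm]

lemma Ka_inv_mul_normalForm (m n : ℤ) : Ka⁻¹ * normalForm (m, n) = normalForm (m - 1, n) := by
  simp only [normalForm, ← mul_assoc, ← zpow_neg_one, ← zpow_add, neg_add_eq_sub]

lemma Kb_mul_normalForm (m n : ℤ) : Kb * normalForm (m, n) = normalForm (-m, n + 1) := by
  simp only [normalForm, ← Kb_mul_Ka_zpow_mul_Kb_inv, zpow_add_one]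
  group

lemma Kb_inv_mul_normalForm (m n : ℤ) : Kb⁻¹ * normalForm (m, n) = normalForm (-m, n - 1) := by
  simp only [normalForm, ← Kb_inv_mul_Ka_zpow_mul_Kb, zpow_sub_one]
  group

lemma normalForm_surjective : Function.Surjective normalForm := by
  intro g
  have hg : g ∈ Subgroup.closure (Set.range PresentedGroup.of) := by
    rw [PresentedGroup.closure_range_of]; exact Subgroup.mem_top g
  induction hg using Subgroup.closure_induction_left with
  | one => exact ⟨(0, 0), by simp [normalForm]⟩
  | mul_left x hx y _ ih =>
    obtain ⟨i, rfl⟩ := hx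
    obtain ⟨⟨m, n⟩, rfl⟩ := ih
    fin_cases i
    · exact ⟨_, (Ka_mul_normalForm m n).symm⟩
    · exact ⟨_, (Kb_mul_normalForm m n).symm⟩
  | inv_mul_cancel x hx y _ ih =>
    obtain ⟨i, rfl⟩ := hx
    obtain ⟨⟨m, n⟩, rfl⟩ := ih
    fin_cases i
    · exact ⟨_, (Ka_inv_mul_normalForm m n).symm⟩
    · exact ⟨_, (Kb_inv_mul_normalForm m n).symm⟩

def shift : Perm (ℤ × ℤ) where
  toFun v := (v.1 + 1, v.2)
  invFun v := (v.1 - 1, v.2)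
  left_inv v := by simp
  right_inv v := by simp

def glide : Perm (ℤ × ℤ) where
  toFun v := (-v.1, v.2 + 1)
  invFun v := (-v.1, v.2 - 1)
  left_inv v := by simp
  right_inv v := by simp

lemma shift_zpow_apply (m : ℤ) (v : ℤ × ℤ) : (shift ^ m) v = (v.1 + m, v.2) := by
  induction m using Int.induction_on generalizing v with
  | zero => simp
  | succ k ih =>
    rw [zpow_add_one, Perm.mul_apply, ih]
    ext <;> simp only [shift, coe_fn_mk]
    ring
  | pred k ih =>
    rw [zpow_sub_one, Perm.mul_apply, ih]
    ext <;> simp only [shift, Perm.inv_def, symm_mk, coe_fn_mk]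
    ring

lemma glide_zpow_apply (n : ℤ) (v : ℤ × ℤ) :
    (glide ^ n) v = (n.negOnePow * v.1, v.2 + n) := by
  induction n using Int.induction_on generalizing v with
  | zero => simp
  | succ k ih =>
    rw [zpow_add_one, Perm.mul_apply, ih]
    ext <;> simp only [glide, coe_fn_mk, Int.negOnePow_succ, Units.val_neg] <;> ring
  | pred k ih =>
    rw [zpow_sub_one, Perm.mul_apply, ih]
    ext <;> simp only [glide, Perm.inv_def, symm_mk, coe_fn_mk, Int.negOnePow_sub,
      Int.negOnePow_one, Units.val_mul, Units.val_neg, Units.val_one] <;> ring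

lemma shift_mul_glide_mul_shift : shift * glide * shift = glide := by
  ext v <;> simp [shift, glide]

def toPerm : KleinGroup →* Perm (ℤ × ℤ) :=
  PresentedGroup.toGroup (f := ![shift, glide]) <| by
    rintro r rfl
    simp [shift_mul_glide_mul_shift]

lemma toPerm_normalForm_apply (mn v : ℤ × ℤ) :
    toPerm (normalForm mn) v = (mn.2.negOnePow * v.1 + mn.1, v.2 + mn.2) := by
  simp [normalForm, toPerm, Ka, Kb, PresentedGroup.toGroup.of, shift_zpow_apply, glide_zpow_apply]

lemma normalForm_injective : Function.Injective normalForm := by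
  intro mn mn' h
  simpa [toPerm_normalForm_apply] using congr_arg (toPerm · 0) h

lemma normalForm_bijective : Function.Bijective normalForm :=
  ⟨normalForm_injective, normalForm_surjective⟩

lemma kleinW_normalForm (mn : ℤ × ℤ) : kleinW (normalForm mn) = (-1) ^ mn.2 := by
  simp [normalForm, kleinW, Ka, Kb, PresentedGroup.toGroup.of]

lemma eq_zero_of_commute_normalForm {m n p q : ℤ} (hn : Even n) (hq : Odd q)
    (h : Commute (normalForm (p, q)) (normalForm (m, n))) : m = 0 := by
  have key := congr_arg (fun g => (toPerm g 0).1) h.eq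
  simp only [map_mul, Perm.mul_apply, toPerm_normalForm_apply, Int.negOnePow_even _ hn,
    Int.negOnePow_odd _ hq, Units.val_one, Units.val_neg, Prod.fst_zero, Prod.snd_zero] at key
  linarith

lemma reversible_normalForm_iff {m n : ℤ} (hn : Even n) :
    Reversible kleinW (normalForm (m, n)) ↔ m = 0 := by
  constructor
  · rintro ⟨h, hcomm, hw⟩
    obtain ⟨⟨p, q⟩, rfl⟩ := normalForm_surjective h
    rw [kleinW_normalForm, ← Int.negOnePow_def, Int.negOnePow_eq_neg_one_iff] at hw
    exact eq_zero_of_commute_normalForm hn hw hcomm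
  · rintro rfl
    refine ⟨normalForm (0, 1), ?_, by simp [kleinW_normalForm]⟩
    simp only [normalForm, zpow_zero, zpow_one, one_mul]
    exact (Commute.refl Kb).zpow_right n

end KleinGroup

/-- in the Klein bottle group `G = ⟨a, b | abab⁻¹⟩` with orientation
homomorphism `w(a) = 1`, `w(b) = −1`: every element is uniquely of the form
`a^m * b^n`; such an element satisfies `w(a^m b^n) = (−1)^n`; and for even `n`,
`a^m b^n` is reversible iff `m = 0`. -/
theorem klein_bottle_normal_form_orientation_reversibility :
    (∀ g : KleinGroup, ∃! mn : ℤ × ℤ, g = Ka ^ mn.1 * Kb ^ mn.2) ∧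
    (∀ m n : ℤ, kleinW (Ka ^ m * Kb ^ n) = (-1) ^ n) ∧
    (∀ m n : ℤ, Even n → (Reversible kleinW (Ka ^ m * Kb ^ n) ↔ m = 0)) :=
  ⟨fun g => by
      simpa only [eq_comm, KleinGroup.normalForm] using
        KleinGroup.normalForm_bijective.existsUnique g,
    fun m n => KleinGroup.kleinW_normalForm (m, n),
    fun _ _ hn => KleinGroup.reversible_normalForm_iff hn⟩
end

section
/- Let F be a free group and w : F → {±1} a nontrivial homomorphism. For a nontrivial element g ∈ F with w(g) = 1, g is reversible with respect to w if and only if g is a power of some element h ∈ F with w(h) = −1. -/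
/-!
Commuting elements of a free group generate a commutative subgroup, which is free by
Nielsen–Schreier. A commutative free group is cyclic, since two distinct free generators never
commute (send them to the transpositions `(0 1)` and `(1 2)` of `S₃`). So if `h` commutes with `g`, both are powers of one element `z`, and `w h = (w z) ^ m = -1`
forces `w z = -1`.
-/

theorem FreeGroup.not_commute_of_ne {α : Type*} {a b : α} (hab : a ≠ b) :
    ¬Commute (of a) (of b) := by
  have hS₃ : ¬Commute (Equiv.swap (0 : Fin 3) 1) (Equiv.swap 1 2) := by
    rw [Commute, SemiconjBy]; decide
  classical
  intro hc
  let f : FreeGroup α →* Equiv.Perm (Fin 3) :=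
    FreeGroup.lift fun x => if x = a then Equiv.swap 0 1 else Equiv.swap 1 2
  have hf := hc.map f
  simp only [f, lift_apply_of, if_pos, if_neg hab.symm] at hf
  exact hS₃ hf

theorem FreeGroup.subsingleton_of_commute {α : Type*} (h : ∀ x y : FreeGroup α, Commute x y) :
    Subsingleton α :=
  ⟨fun _ _ => by_contra fun hab => not_commute_of_ne hab (h _ _)⟩

protected theorem FreeGroup.isCyclic_of_subsingleton {α : Type*} [Subsingleton α] :
    IsCyclic (FreeGroup α) := by
  cases isEmpty_or_nonempty α with
  | inl _ => infer_instance
  | inr hα =>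
    have : Unique α := uniqueOfSubsingleton hα.some
    infer_instance

theorem IsFreeGroup.isCyclic_of_isMulCommutative {G : Type*} [Group G] [IsFreeGroup G]
    [IsMulCommutative G] : IsCyclic G := by
  let e := toFreeGroup G
  have : Subsingleton (Generators G) := FreeGroup.subsingleton_of_commute fun x y =>
    e.symm.injective <| by simp only [map_mul]; exact mul_comm' _ _
  exact (e.isCyclic).mpr FreeGroup.isCyclic_of_subsingleton

theorem FreeGroup.exists_zpow_eq_of_commute {α : Type*} {x y : FreeGroup α} (h : Commute x y) :
    ∃ (z : FreeGroup α) (m n : ℤ), z ^ m = x ∧ z ^ n = y := by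
  let H := Subgroup.closure {x, y}
  have : IsMulCommutative H := Subgroup.isMulCommutative_closure <| by
    simp only [Set.mem_insert_iff, Set.mem_singleton_iff]
    rintro _ (rfl | rfl) _ (rfl | rfl)
    exacts [rfl, h.eq, h.symm.eq, rfl]
  have : IsCyclic H := IsFreeGroup.isCyclic_of_isMulCommutative
  obtain ⟨z, hz⟩ := exists_zpow_surjective H
  obtain ⟨m, hm⟩ := hz ⟨x, Subgroup.subset_closure (by simp)⟩
  obtain ⟨n, hn⟩ := hz ⟨y, Subgroup.subset_closure (by simp)⟩
  exact ⟨z, m, n, congrArg Subtype.val hm, congrArg Subtype.val hn⟩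

theorem Int.units_eq_neg_one_of_zpow_eq_neg_one {u : ℤˣ} {m : ℤ} (h : u ^ m = -1) : u = -1 :=
  (units_eq_one_or u).resolve_left fun hu => by simp [hu] at h

theorem reversible_iff_zpow_of_orientation_reversing_general {ι : Type*}
    (w : FreeGroup ι →* ℤˣ)
    (g : FreeGroup ι) :
    Reversible w g ↔ ∃ (h : FreeGroup ι) (n : ℤ), w h = -1 ∧ g = h ^ n := by
  constructor
  · rintro ⟨h, hc, hwh⟩
    obtain ⟨z, m, n, rfl, rfl⟩ := FreeGroup.exists_zpow_eq_of_commute hc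
    rw [map_zpow] at hwh
    exact ⟨z, n, Int.units_eq_neg_one_of_zpow_eq_neg_one hwh, rfl⟩
  · rintro ⟨h, n, hwh, rfl⟩
    exact ⟨h, (Commute.refl h).zpow_right n, hwh⟩

/-- in a free group `F` with a nontrivial homomorphism
`w : F → {±1}`, a nontrivial orientation-preserving element `g` (that is, `g ≠ 1`
and `w(g) = 1`) is reversible iff it is a power of some element `h` with
`w(h) = −1`. -/
theorem reversible_iff_zpow_of_orientation_reversing {ι : Type*}
    (w : FreeGroup ι →* ℤˣ) (hw : ∃ x : FreeGroup ι, w x ≠ 1)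
    (g : FreeGroup ι) (hg : g ≠ 1) (hgw : w g = 1) :
    Reversible w g ↔ ∃ (h : FreeGroup ι) (n : ℤ), w h = -1 ∧ g = h ^ n :=
  reversible_iff_zpow_of_orientation_reversing_general w g
end
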